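/- arXiv:2212.09336 — 2 statements merged into one kernel-verified Lean document; each statement's English description precedes it below -/
import Mathlib

section
/- For all r ∈ (0,1) and all integers p ≥ 1, L(r,p-1) = (1 - L(r',-p))/(1 + L(r',-p)), where L(r,p) denotes the ascending Landen sequence of r and L(r',-p) denotes the descending Landen sequence of r' = √(1-r²). -/
/-- Descending Landen sequence: `descL r p = L(r,-p)`. -/
noncomputable def descL (r : ℝ) : ℕ → ℝ
  | 0 => r
  | p + 1 => (descL r p / (1 + Real.sqrt (1 - (descL r p) ^ 2))) ^ 2

/-- Ascending Landen sequence: `ascL r p = L(r,p)`. -/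
noncomputable def ascL (r : ℝ) : ℕ → ℝ
  | 0 => r
  | p + 1 => 2 * Real.sqrt (ascL r p) / (1 + ascL r p)

lemma lemA {d : ℝ} (hd : d ∈ Set.Ioo (0:ℝ) 1) :
    (1 - (d / (1 + Real.sqrt (1 - d ^ 2))) ^ 2) /
      (1 + (d / (1 + Real.sqrt (1 - d ^ 2))) ^ 2) = Real.sqrt (1 - d ^ 2) := by
  obtain ⟨h0, h1⟩ := hd
  set s := Real.sqrt (1 - d ^ 2) with hs
  have hd2 : 0 < 1 - d ^ 2 := by nlinarith
  have hs0 : 0 < s := Real.sqrt_pos.mpr hd2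
  have hs2 : s ^ 2 = 1 - d ^ 2 := Real.sq_sqrt hd2.le
  have h1s : (0:ℝ) < 1 + s := by linarith
  have hden : (0:ℝ) < 1 + (d / (1 + s)) ^ 2 := by positivity
  field_simp
  ring_nf
  nlinarith [hs2, sq_nonneg s, sq_nonneg d]

lemma descL_mem {r : ℝ} (hr : r ∈ Set.Ioo (0:ℝ) 1) (p : ℕ) :
    descL r p ∈ Set.Ioo (0:ℝ) 1 := by
  induction p with
  | zero => exact hr
  | succ p ih =>
    obtain ⟨h0, h1⟩ := ih
    have hs0 : 0 ≤ Real.sqrt (1 - descL r p ^ 2) := Real.sqrt_nonneg _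
    have hfrac0 : 0 < descL r p / (1 + Real.sqrt (1 - descL r p ^ 2)) := by positivity
    have hfrac1 : descL r p / (1 + Real.sqrt (1 - descL r p ^ 2)) < 1 := by
      rw [div_lt_one (by linarith)]; linarith
    constructor
    · simpa [descL] using pow_pos hfrac0 2
    · simpa [descL] using pow_lt_one₀ hfrac0.le hfrac1 two_ne_zero

lemma lemC {d : ℝ} (hd : d ∈ Set.Ioo (0:ℝ) 1) :
    2 * Real.sqrt ((1 - d) / (1 + d)) / (1 + (1 - d) / (1 + d)) =
      Real.sqrt (1 - d ^ 2) := by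
  obtain ⟨h0, h1⟩ := hd
  have h1d : (0:ℝ) < 1 + d := by linarith
  have key : Real.sqrt (1 - d ^ 2) = Real.sqrt ((1 - d) / (1 + d)) * (1 + d) := by
    rw [show (1 - d ^ 2 : ℝ) = (1 - d) / (1 + d) * (1 + d) ^ 2 by field_simp; ring,
      Real.sqrt_mul (div_nonneg (by linarith) (by linarith)), Real.sqrt_sq h1d.le]
  rw [key]
  have h2 : 1 + (1 - d) / (1 + d) = 2 / (1 + d) := by field_simp; ring
  rw [h2]
  field_simp

theorem ascL_eq_one_sub_descL_div (r : ℝ) (hr : r ∈ Set.Ioo (0:ℝ) 1) (p : ℕ)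
    (hp : 1 ≤ p) :
    ascL r (p - 1) =
      (1 - descL (Real.sqrt (1 - r ^ 2)) p) / (1 + descL (Real.sqrt (1 - r ^ 2)) p) := by
  obtain ⟨n, rfl⟩ : ∃ n, p = n + 1 := ⟨p - 1, (Nat.succ_pred_eq_of_pos hp).symm⟩
  simp only [Nat.add_sub_cancel]
  obtain ⟨hr0, hr1⟩ := hr
  set r' := Real.sqrt (1 - r ^ 2) with hr'def
  have hrsq : 0 < 1 - r ^ 2 := by nlinarith
  have hr' : r' ∈ Set.Ioo (0:ℝ) 1 := by
    constructor
    · exact Real.sqrt_pos.mpr hrsq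
    · rw [hr'def]
      have h := Real.sqrt_lt_sqrt hrsq.le (show 1 - r ^ 2 < 1 by nlinarith)
      simpa using h
  have hr'sq : r' ^ 2 = 1 - r ^ 2 := Real.sq_sqrt hrsq.le
  have hback : Real.sqrt (1 - r' ^ 2) = r := by
    rw [hr'sq, show (1 - (1 - r ^ 2) : ℝ) = r ^ 2 by ring, Real.sqrt_sq hr0.le]
  induction n with
  | zero =>
    show ascL r 0 = _
    simp only [ascL, descL]
    rw [lemA hr', hback]
  | succ n ih =>
    have hd := descL_mem hr' (n + 1)
    show 2 * Real.sqrt (ascL r n) / (1 + ascL r n) = _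
    rw [ih (Nat.le_add_left 1 n), lemC hd]
    exact (lemA hd).symm
end

section
/- Let u, v : (0,1) → (0,∞) be strictly decreasing homeomorphisms with u(t) < μ(t) < v(t) for all t ∈ (0,1). Let y > 0, let p be a nonnegative integer, let r ∈ (0,1) satisfy μ(r) = y, and let s₁, s₂ ∈ (0,1) satisfy u(s₁) = 2^(-p)·y and v(s₂) = 2^(-p)·y. Then L(s₁,-p) < r < L(s₂,-p), where L(·,-p) denotes the p-th term of the descending Landen sequence. -/
/-- Complete elliptic integral of the first kind. -/
noncomputable def ellK (r : ℝ) : ℝ :=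
  ∫ x in (0:ℝ)..1, 1 / Real.sqrt ((1 - x ^ 2) * (1 - r ^ 2 * x ^ 2))

/-- The Grötzsch modulus function `μ`. -/
noncomputable def mu (r : ℝ) : ℝ :=
  Real.pi / 2 * ellK (Real.sqrt (1 - r ^ 2)) / ellK r

open Real Set MeasureTheory

noncomputable def ellKIntegrand (r x : ℝ) : ℝ :=
  1 / √((1 - x ^ 2) * (1 - r ^ 2 * x ^ 2))

lemma ellK_eq_integral_ellKIntegrand (r : ℝ) : ellK r = ∫ x in (0:ℝ)..1, ellKIntegrand r x :=
  rfl

lemma ellKIntegrand_pos {r x : ℝ} (hr : r ^ 2 < 1) (hx : x ∈ Ioo (0:ℝ) 1) :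
    0 < ellKIntegrand r x := by
  obtain ⟨hx0, hx1⟩ := hx
  have h1 : 0 < 1 - x ^ 2 := by nlinarith
  have h2 : 0 < 1 - r ^ 2 * x ^ 2 := by nlinarith [sq_nonneg r]
  unfold ellKIntegrand; positivity

lemma ellKIntegrand_le {r x : ℝ} (hr : r ^ 2 < 1) (hx : x ∈ Icc (0:ℝ) 1) :
    ellKIntegrand r x ≤ (1 - r ^ 2) ^ (-(1/2) : ℝ) * (1 - x) ^ (-(1/2) : ℝ) := by
  obtain ⟨hx0, hx1⟩ := hx
  rw [← mul_rpow (by linarith) (by linarith), rpow_neg (by nlinarith), ← sqrt_eq_rpow,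
    ← one_div]
  rcases hx1.eq_or_lt with rfl | hx1
  · simp [ellKIntegrand]
  · have hA : (1 - r ^ 2) * (1 - x) ≤ (1 - x ^ 2) * (1 - r ^ 2 * x ^ 2) := by
      nlinarith [mul_nonneg (sub_nonneg.2 hx1.le) (mul_nonneg (sq_nonneg r) (sub_nonneg.2 hx1.le)),
        mul_nonneg hx0 (mul_nonneg (sub_nonneg.2 hx1.le) (sub_nonneg.2 hr.le)), sq_nonneg x]
    exact one_div_le_one_div_of_le (sqrt_pos.2 (by nlinarith)) (sqrt_le_sqrt hA)

lemma intervalIntegrable_ellKIntegrand {r : ℝ} (hr : r ^ 2 < 1) :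
    IntervalIntegrable (ellKIntegrand r) volume 0 1 := by
  have hdom : IntervalIntegrable (fun x : ℝ => (1 - r ^ 2) ^ (-(1/2) : ℝ) * (1 - x) ^ (-(1/2) : ℝ))
      volume 0 1 := by
    refine IntervalIntegrable.const_mul ?_ _
    simpa using ((intervalIntegral.intervalIntegrable_rpow' (by norm_num) :
      IntervalIntegrable (fun x : ℝ => x ^ (-(1/2) : ℝ)) volume 0 1).comp_sub_left 1).symm
  refine hdom.mono_fun (Measurable.aestronglyMeasurable (by unfold ellKIntegrand; fun_prop)) ?_
  rw [Filter.EventuallyLE, ae_restrict_iff' measurableSet_uIoc]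
  refine Filter.Eventually.of_forall fun x hx => ?_
  rw [uIoc_of_le zero_le_one] at hx
  have hpos : 0 ≤ ellKIntegrand r x := by unfold ellKIntegrand; positivity
  have hle := ellKIntegrand_le hr (Ioc_subset_Icc_self hx)
  rwa [norm_of_nonneg hpos, norm_of_nonneg (hpos.trans hle)]


lemma ellK_pos {r : ℝ} (hr : r ^ 2 < 1) : 0 < ellK r :=
  intervalIntegral.intervalIntegral_pos_of_pos_on (intervalIntegrable_ellKIntegrand hr)
    (fun _ hx => ellKIntegrand_pos hr hx) one_pos

lemma ellK_strictMonoOn : StrictMonoOn ellK (Ico (0:ℝ) 1) := by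
  intro a ha b hb hab
  have ha2 : a ^ 2 < b ^ 2 := by nlinarith [ha.1]
  have hb2 : b ^ 2 < 1 := by nlinarith [hb.1, hb.2]
  rw [ellK_eq_integral_ellKIntegrand, ellK_eq_integral_ellKIntegrand, ← sub_pos,
    ← intervalIntegral.integral_sub (intervalIntegrable_ellKIntegrand hb2)
      (intervalIntegrable_ellKIntegrand (ha2.trans hb2))]
  refine intervalIntegral.intervalIntegral_pos_of_pos_on
    ((intervalIntegrable_ellKIntegrand hb2).sub (intervalIntegrable_ellKIntegrand (ha2.trans hb2)))
    (fun x hx => sub_pos.2 ?_) one_pos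
  have h1 : 0 < 1 - x ^ 2 := by nlinarith [hx.1, hx.2]
  have h2 : 0 < 1 - b ^ 2 * x ^ 2 := by nlinarith [hx.1, hx.2]
  have h3 : (1 - x ^ 2) * (1 - b ^ 2 * x ^ 2) < (1 - x ^ 2) * (1 - a ^ 2 * x ^ 2) := by
    gcongr
    exact pow_pos hx.1 2
  unfold ellKIntegrand
  exact one_div_lt_one_div_of_lt (sqrt_pos.2 (by positivity)) (sqrt_lt_sqrt (by positivity) h3)

noncomputable def landenMap (k t : ℝ) : ℝ := (1 + k) * t / (1 + k * t ^ 2)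

lemma hasDerivAt_landenMap {k : ℝ} (hk : 0 ≤ k) (t : ℝ) :
    HasDerivAt (landenMap k) ((1 + k) * (1 - k * t ^ 2) / (1 + k * t ^ 2) ^ 2) t := by
  have hd : 0 < 1 + k * t ^ 2 := by positivity
  have h1 : HasDerivAt (fun t : ℝ => (1 + k) * t) (1 + k) t := by
    simpa using (hasDerivAt_id t).const_mul (1 + k)
  have h2 : HasDerivAt (fun t : ℝ => 1 + k * t ^ 2) (k * (2 * t)) t := by
    simpa using ((hasDerivAt_pow 2 t).const_mul k).const_add 1
  exact (h1.div h2 hd.ne').congr_deriv (by ring)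

lemma landenMap_injOn {k : ℝ} (hk0 : 0 ≤ k) (hk1 : k ≤ 1) : InjOn (landenMap k) (Ioo 0 1) := by
  intro t₁ ht₁ t₂ ht₂ heq
  have d₁ : 0 < 1 + k * t₁ ^ 2 := by positivity
  have d₂ : 0 < 1 + k * t₂ ^ 2 := by positivity
  rw [landenMap, landenMap, div_eq_div_iff d₁.ne' d₂.ne'] at heq
  have hprod : (t₁ - t₂) * ((1 + k) * (1 - k * t₁ * t₂)) = 0 := by linear_combination heq
  have hk : 0 < (1 + k) * (1 - k * t₁ * t₂) := by
    have : t₁ * t₂ < 1 := by nlinarith [ht₁.1, ht₁.2, ht₂.1, ht₂.2]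
    have : k * (t₁ * t₂) < 1 := by nlinarith [mul_pos ht₁.1 ht₂.1]
    nlinarith
  exact sub_eq_zero.1 ((mul_eq_zero.1 hprod).resolve_right hk.ne')

lemma landenMap_image {k : ℝ} (hk0 : 0 ≤ k) (hk1 : k ≤ 1) :
    landenMap k '' Ioo 0 1 = Ioo 0 1 := by
  have hcont : Continuous (landenMap k) := by
    unfold landenMap
    exact (continuous_const.mul continuous_id).div (by fun_prop) fun t => by positivity
  refine (Subset.antisymm ?_ ?_)
  · rintro _ ⟨t, ⟨ht0, ht1⟩, rfl⟩
    have d : 0 < 1 + k * t ^ 2 := by positivity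
    refine ⟨by unfold landenMap; positivity, ?_⟩
    rw [landenMap, div_lt_one d]
    nlinarith [mul_nonneg (sub_nonneg.2 hk1) (mul_pos ht0 (sub_pos.2 ht1)).le,
      mul_pos ht0 (sub_pos.2 ht1)]
  · have h0 : landenMap k 0 = 0 := by simp [landenMap]
    have h1 : landenMap k 1 = 1 := by
      simp only [landenMap, one_pow, mul_one]
      exact div_self (by positivity)
    simpa [h0, h1] using intermediate_value_Ioo zero_le_one hcont.continuousOn

lemma ellK_eq_setIntegral_Ioo (r : ℝ) : ellK r = ∫ x in Ioo (0:ℝ) 1, ellKIntegrand r x := by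
  rw [ellK_eq_integral_ellKIntegrand, intervalIntegral.integral_of_le zero_le_one,
    integral_Ioc_eq_integral_Ioo]

lemma abs_deriv_mul_ellKIntegrand_landenMap {k t : ℝ} (hk0 : 0 ≤ k) (hk1 : k < 1)
    (ht : t ∈ Ioo (0:ℝ) 1) :
    |(1 + k) * (1 - k * t ^ 2) / (1 + k * t ^ 2) ^ 2| *
        ellKIntegrand (2 * √k / (1 + k)) (landenMap k t) = (1 + k) * ellKIntegrand k t := by
  obtain ⟨ht0, ht1⟩ := ht
  have hd : 0 < 1 + k * t ^ 2 := by positivity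
  have hn : 0 < 1 - k * t ^ 2 := by nlinarith
  have hq : 0 < (1 - k * t ^ 2) / (1 + k * t ^ 2) ^ 2 := by positivity
  have hA : 0 < (1 - t ^ 2) * (1 - k ^ 2 * t ^ 2) := by
    have : 0 < 1 - t ^ 2 := by nlinarith
    have : 0 < 1 - k ^ 2 * t ^ 2 := by nlinarith
    positivity
  have hL2 : (2 * √k / (1 + k)) ^ 2 = 4 * k / (1 + k) ^ 2 := by
    rw [div_pow, mul_pow, sq_sqrt hk0]
    norm_num
  have hfactor : (1 - landenMap k t ^ 2) * (1 - (2 * √k / (1 + k)) ^ 2 * landenMap k t ^ 2)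
      = (1 - t ^ 2) * (1 - k ^ 2 * t ^ 2) * ((1 - k * t ^ 2) / (1 + k * t ^ 2) ^ 2) ^ 2 := by
    rw [hL2, landenMap]
    field_simp
    ring
  rw [mul_div_assoc, abs_of_pos (mul_pos (by linarith) hq), ellKIntegrand, ellKIntegrand,
    hfactor, sqrt_mul hA.le, sqrt_sq hq.le]
  field_simp

lemma ellK_landen {k : ℝ} (hk0 : 0 ≤ k) (hk1 : k < 1) :
    ellK (2 * √k / (1 + k)) = (1 + k) * ellK k := by
  have hsubst := integral_image_eq_integral_abs_deriv_smul measurableSet_Ioo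
    (fun t _ => (hasDerivAt_landenMap hk0 t).hasDerivWithinAt) (landenMap_injOn hk0 hk1.le)
    (ellKIntegrand (2 * √k / (1 + k)))
  rw [landenMap_image hk0 hk1.le] at hsubst
  rw [ellK_eq_setIntegral_Ioo, hsubst, ellK_eq_setIntegral_Ioo, ← integral_const_mul]
  exact setIntegral_congr_fun measurableSet_Ioo
    fun t ht => abs_deriv_mul_ellKIntegrand_landenMap hk0 hk1 ht

lemma sqrt_one_sub_sq_mem_Ioo {r : ℝ} (hr : r ∈ Ioo (0:ℝ) 1) : √(1 - r ^ 2) ∈ Ioo (0:ℝ) 1 := by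
  obtain ⟨h0, h1⟩ := hr
  refine ⟨sqrt_pos.2 (by nlinarith), ?_⟩
  rw [sqrt_lt' one_pos]
  nlinarith

lemma mu_strictAntiOn : StrictAntiOn mu (Ioo (0:ℝ) 1) := by
  intro a ha b hb hab
  have ha' := sqrt_one_sub_sq_mem_Ioo ha
  have hb' := sqrt_one_sub_sq_mem_Ioo hb
  have hK' : ellK √(1 - b ^ 2) < ellK √(1 - a ^ 2) :=
    ellK_strictMonoOn (Ioo_subset_Ico_self hb') (Ioo_subset_Ico_self ha')
      (sqrt_lt_sqrt (by nlinarith [hb.1, hb.2]) (by nlinarith [ha.1]))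
  have hK : ellK a < ellK b :=
    ellK_strictMonoOn (Ioo_subset_Ico_self ha) (Ioo_subset_Ico_self hb) hab
  have hKa := ellK_pos (pow_lt_one₀ ha.1.le ha.2 two_ne_zero)
  have hKb' := ellK_pos (pow_lt_one₀ hb'.1.le hb'.2 two_ne_zero)
  unfold mu
  rw [div_lt_div_iff₀ (hKa.trans hK) hKa]
  have := pi_pos
  calc π / 2 * ellK √(1 - b ^ 2) * ellK a < π / 2 * ellK √(1 - a ^ 2) * ellK a := by gcongr
    _ < π / 2 * ellK √(1 - a ^ 2) * ellK b := by
      gcongr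
      exact mul_pos (by positivity) (hKb'.trans hK')

lemma ascL_one (t : ℝ) : ascL t 1 = 2 * √t / (1 + t) := rfl

lemma descL_one (t : ℝ) : descL t 1 = (t / (1 + √(1 - t ^ 2))) ^ 2 := rfl

lemma descL_succ (t : ℝ) (p : ℕ) : descL t (p + 1) = descL (descL t p) 1 := rfl

lemma ascL_one_descL_one {t : ℝ} (ht : t ∈ Icc (0:ℝ) 1) : ascL (descL t 1) 1 = t := by
  obtain ⟨h0, h1⟩ := ht
  have hσ2 : √(1 - t ^ 2) ^ 2 = 1 - t ^ 2 := sq_sqrt (by nlinarith)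
  have hd : 0 < 1 + √(1 - t ^ 2) := by positivity
  have hden : 1 + (t / (1 + √(1 - t ^ 2))) ^ 2 = 2 / (1 + √(1 - t ^ 2)) := by
    field_simp
    linear_combination hσ2
  rw [ascL_one, descL_one, sqrt_sq (by positivity), hden]
  field_simp

lemma descL_one_mem_Ioo {t : ℝ} (ht : t ∈ Ioo (0:ℝ) 1) : descL t 1 ∈ Ioo (0:ℝ) 1 := by
  obtain ⟨h0, h1⟩ := ht
  have hd : 0 < 1 + √(1 - t ^ 2) := by positivity
  rw [descL_one]
  refine ⟨by positivity, pow_lt_one₀ (by positivity) ?_ two_ne_zero⟩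
  rw [div_lt_one hd]
  linarith [sqrt_nonneg (1 - t ^ 2)]

lemma descL_mem_Ioo {s : ℝ} (hs : s ∈ Ioo (0:ℝ) 1) (p : ℕ) : descL s p ∈ Ioo (0:ℝ) 1 := by
  induction p with
  | zero => exact hs
  | succ p ih => exact descL_one_mem_Ioo ih

/-- With `m = (1 - k) / (1 + k)`, the Landen transforms of `k` and of `m` are the complementary
moduli of each other, so `ellK_landen` rescales the two periods in `mu` by `1 + k` and `1 + m`. -/
lemma mu_ascL_one {k : ℝ} (hk : k ∈ Ioo (0:ℝ) 1) : mu (ascL k 1) = mu k / 2 := by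
  obtain ⟨hk0, hk1⟩ := hk
  set m := (1 - k) / (1 + k) with hm
  have hm0 : 0 < m := by positivity
  have hm1 : m < 1 := by rw [hm, div_lt_one (by positivity)]; linarith
  have h1m : 1 + m = 2 / (1 + k) := by rw [hm]; field_simp; ring
  have hcompl : √(1 - ascL k 1 ^ 2) = m := by
    rw [ascL_one, div_pow, mul_pow, sq_sqrt hk0.le, ← sqrt_sq hm0.le, hm]
    congr 1
    field_simp
    ring
  have hcompl' : ascL m 1 = √(1 - k ^ 2) := by
    rw [ascL_one, h1m, ← sqrt_sq (by positivity : (0:ℝ) ≤ 2 * √m / (2 / (1 + k))),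
      div_pow, mul_pow, sq_sqrt hm0.le, hm]
    congr 1
    field_simp
    ring
  have hKk := ellK_pos (pow_lt_one₀ hk0.le hk1 two_ne_zero)
  unfold mu
  rw [hcompl, ← hcompl', ascL_one, ascL_one, ellK_landen hk0.le hk1, ellK_landen hm0.le hm1, h1m]
  field_simp

lemma mu_descL_one {t : ℝ} (ht : t ∈ Ioo (0:ℝ) 1) : mu (descL t 1) = 2 * mu t := by
  have h := mu_ascL_one (descL_one_mem_Ioo ht)
  rw [ascL_one_descL_one (Ioo_subset_Icc_self ht)] at h
  linarith

lemma mu_descL {s : ℝ} (hs : s ∈ Ioo (0:ℝ) 1) (p : ℕ) : mu (descL s p) = 2 ^ p * mu s := by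
  induction p with
  | zero => simp [descL]
  | succ p ih => rw [descL_succ, mu_descL_one (descL_mem_Ioo hs p), ih, pow_succ]; ring

lemma descL_lt_iff_mu_lt {s r : ℝ} (hs : s ∈ Ioo (0:ℝ) 1) (hr : r ∈ Ioo (0:ℝ) 1) (p : ℕ) :
    descL s p < r ↔ mu r < 2 ^ p * mu s := by
  rw [← mu_descL hs p]
  exact (mu_strictAntiOn.lt_iff_gt hr (descL_mem_Ioo hs p)).symm

lemma lt_descL_iff_lt_mu {s r : ℝ} (hs : s ∈ Ioo (0:ℝ) 1) (hr : r ∈ Ioo (0:ℝ) 1) (p : ℕ) :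
    r < descL s p ↔ 2 ^ p * mu s < mu r := by
  rw [← mu_descL hs p]
  exact (mu_strictAntiOn.lt_iff_gt (descL_mem_Ioo hs p) hr).symm

theorem descL_bounds_for_mu_inv_general (u v : ℝ → ℝ)
    (huv : ∀ t ∈ Set.Ioo (0:ℝ) 1, u t < mu t ∧ mu t < v t)
    (y : ℝ) (p : ℕ)
    (r : ℝ) (hr : r ∈ Set.Ioo (0:ℝ) 1) (hμr : mu r = y)
    (s₁ : ℝ) (hs₁ : s₁ ∈ Set.Ioo (0:ℝ) 1) (hs₁eq : u s₁ = (2:ℝ) ^ (-(p:ℤ)) * y)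
    (s₂ : ℝ) (hs₂ : s₂ ∈ Set.Ioo (0:ℝ) 1) (hs₂eq : v s₂ = (2:ℝ) ^ (-(p:ℤ)) * y) :
    descL s₁ p < r ∧ r < descL s₂ p := by
  have hscale : ∀ z : ℝ, (2:ℝ) ^ p * ((2:ℝ) ^ (-(p:ℤ)) * z) = z := fun z => by
    rw [zpow_neg, zpow_natCast, ← mul_assoc, mul_inv_cancel₀ (by positivity), one_mul]
  rw [descL_lt_iff_mu_lt hs₁ hr, lt_descL_iff_lt_mu hs₂ hr]
  constructor
  · calc mu r = 2 ^ p * u s₁ := by rw [hs₁eq, hscale, hμr]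
      _ < 2 ^ p * mu s₁ := by gcongr; exact (huv s₁ hs₁).1
  · calc 2 ^ p * mu s₂ < 2 ^ p * v s₂ := by gcongr; exact (huv s₂ hs₂).2
      _ = mu r := by rw [hs₂eq, hscale, hμr]

theorem descL_bounds_for_mu_inv (u v : ℝ → ℝ)
    (hu_anti : StrictAntiOn u (Set.Ioo (0:ℝ) 1))
    (hu_bij : Set.BijOn u (Set.Ioo (0:ℝ) 1) (Set.Ioi (0:ℝ)))
    (hv_anti : StrictAntiOn v (Set.Ioo (0:ℝ) 1))
    (hv_bij : Set.BijOn v (Set.Ioo (0:ℝ) 1) (Set.Ioi (0:ℝ)))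
    (huv : ∀ t ∈ Set.Ioo (0:ℝ) 1, u t < mu t ∧ mu t < v t)
    (y : ℝ) (hy : 0 < y) (p : ℕ)
    (r : ℝ) (hr : r ∈ Set.Ioo (0:ℝ) 1) (hμr : mu r = y)
    (s₁ : ℝ) (hs₁ : s₁ ∈ Set.Ioo (0:ℝ) 1) (hs₁eq : u s₁ = (2:ℝ) ^ (-(p:ℤ)) * y)
    (s₂ : ℝ) (hs₂ : s₂ ∈ Set.Ioo (0:ℝ) 1) (hs₂eq : v s₂ = (2:ℝ) ^ (-(p:ℤ)) * y) :
    descL s₁ p < r ∧ r < descL s₂ p :=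
  descL_bounds_for_mu_inv_general u v huv y p r hr hμr s₁ hs₁ hs₁eq s₂ hs₂ hs₂eq
end
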